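/- arXiv:1405.4674 — 5 statements merged into one kernel-verified Lean document; each statement's English description precedes it below -/
import Mathlib

section
/- Let ϑ be a real number with sin(2ϑ) ≠ 0 (i.e., ϑ is not a multiple of π/2). Then there exists a positive real constant C(ϑ) such that for every positive integer n, the quantity t_n(ϑ) = ∑_{k=0}^{n} binomial(2k,k) binomial(2n−2k, n−k) · exp(4ikϑ) satisfies |t_n(ϑ)| ≤ C(ϑ) · 4^n / √n. -/
/-
The coefficients `a_k = C(2k,k) C(2n-2k,n-k)` of `t_n(ϑ)` as a polynomial in `z = e^{4iϑ}` decrease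
and then increase in `k`, because `k ↦ C(2k,k)` is log-convex. Abel summation against the geometric
sums `∑_{j<m} z^j`, which are bounded by `2 / |z - 1| = 1 / |sin 2ϑ|`, therefore bounds `|t_n(ϑ)|`
by `(a_n + total variation of a) / |sin 2ϑ| = (3 a_n - 2 min a) / |sin 2ϑ| ≤ 3 C(2n,n) / |sin 2ϑ|`.
Finally `C(2n,n) ≤ 4^n / √(2n+1)`.
-/

/-- `t_n(ϑ) = ∑_{k=0}^{n} C(2k,k) C(2n−2k, n−k) e^{4ikϑ}`. -/
noncomputable def tSeq (n : ℕ) (θ : ℝ) : ℂ :=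
  ∑ k ∈ Finset.range (n + 1),
    ((2 * k).choose k : ℂ) * ((2 * (n - k)).choose (n - k) : ℂ) *
      Complex.exp (4 * k * θ * Complex.I)

open Finset

namespace Nat

theorem centralBinom_succ_mul_le_mul_centralBinom_succ {i j : ℕ} (h : i ≤ j) :
    centralBinom (i + 1) * centralBinom j ≤ centralBinom i * centralBinom (j + 1) := by
  refine Nat.le_of_mul_le_mul_left ?_ (show 0 < (i + 1) * (j + 1) by positivity)
  calc (i + 1) * (j + 1) * (centralBinom (i + 1) * centralBinom j)
      = ((i + 1) * centralBinom (i + 1)) * ((j + 1) * centralBinom j) := by ring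
    _ = 2 * ((2 * i + 1) * (j + 1)) * (centralBinom i * centralBinom j) := by
        rw [succ_mul_centralBinom_succ]; ring
    _ ≤ 2 * ((i + 1) * (2 * j + 1)) * (centralBinom i * centralBinom j) :=
        Nat.mul_le_mul_right _ (Nat.mul_le_mul_left _ (by nlinarith))
    _ = (i + 1) * ((j + 1) * centralBinom (j + 1)) * centralBinom i := by
        rw [succ_mul_centralBinom_succ j]; ring
    _ = (i + 1) * (j + 1) * (centralBinom i * centralBinom (j + 1)) := by ring

theorem centralBinom_sq_mul_le (n : ℕ) : centralBinom n ^ 2 * (2 * n + 1) ≤ 16 ^ n := by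
  induction n with
  | zero => simp
  | succ n ih =>
    refine Nat.le_of_mul_le_mul_left ?_ (show 0 < (n + 1) ^ 2 by positivity)
    calc (n + 1) ^ 2 * (centralBinom (n + 1) ^ 2 * (2 * (n + 1) + 1))
        = ((n + 1) * centralBinom (n + 1)) ^ 2 * (2 * n + 3) := by ring
      _ = 4 * ((2 * n + 1) * (2 * n + 3)) * (centralBinom n ^ 2 * (2 * n + 1)) := by
          rw [succ_mul_centralBinom_succ]; ring
      _ ≤ 4 * (4 * (n + 1) ^ 2) * (centralBinom n ^ 2 * (2 * n + 1)) :=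
          Nat.mul_le_mul_right _ (Nat.mul_le_mul_left _ (by nlinarith))
      _ ≤ 4 * (4 * (n + 1) ^ 2) * 16 ^ n := by gcongr
      _ = (n + 1) ^ 2 * 16 ^ (n + 1) := by ring

theorem centralBinom_le_four_pow_div_sqrt {n : ℕ} (hn : 0 < n) :
    (centralBinom n : ℝ) ≤ 4 ^ n / √n := by
  have hsqrt : 0 < √(n : ℝ) := Real.sqrt_pos.2 (by exact_mod_cast hn)
  rw [le_div_iff₀ hsqrt, ← pow_le_pow_iff_left₀ (by positivity) (by positivity) two_ne_zero,
    mul_pow, Real.sq_sqrt (Nat.cast_nonneg n), ← pow_mul, mul_comm n, pow_mul]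
  have := centralBinom_sq_mul_le n
  calc (centralBinom n : ℝ) ^ 2 * n ≤ (centralBinom n : ℝ) ^ 2 * (2 * n + 1) := by
        gcongr; linarith
    _ ≤ (4 ^ 2) ^ n := by norm_num; exact_mod_cast this

end Nat

theorem norm_geom_sum_le {K : Type*} [NormedDivisionRing K] {z : K} (hz : ‖z‖ ≤ 1) (h1 : z ≠ 1)
    (m : ℕ) : ‖∑ j ∈ range m, z ^ j‖ ≤ 2 / ‖z - 1‖ := by
  rw [geom_sum_eq h1, norm_div]
  gcongr
  calc ‖z ^ m - 1‖ ≤ ‖z ^ m‖ + ‖(1 : K)‖ := norm_sub_le _ _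
    _ ≤ 1 + 1 := by rw [norm_pow, norm_one]; gcongr; exact pow_le_one₀ (norm_nonneg z) hz
    _ = 2 := one_add_one_eq_two

theorem norm_sum_range_succ_smul_le {E : Type*} [SeminormedAddCommGroup E] [NormedSpace ℝ E]
    (a : ℕ → ℝ) (f : ℕ → E) (n : ℕ) {B : ℝ} (hB : ∀ m, ‖∑ j ∈ range m, f j‖ ≤ B) :
    ‖∑ k ∈ range (n + 1), a k • f k‖ ≤ (|a n| + ∑ i ∈ range n, |a (i + 1) - a i|) * B := by
  rw [sum_range_by_parts, Nat.add_sub_cancel, add_mul, sum_mul]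
  refine (norm_sub_le _ _).trans (add_le_add ?_ ((norm_sum_le _ _).trans (sum_le_sum ?_)))
  · rw [norm_smul, Real.norm_eq_abs]
    gcongr
    exact hB _
  · intro i _
    rw [norm_smul, Real.norm_eq_abs]
    gcongr
    exact hB _

theorem sum_range_abs_sub_eq_of_antitone_monotone (a : ℕ → ℝ) {m n : ℕ} (hmn : m ≤ n)
    (hdec : ∀ i < m, a (i + 1) ≤ a i) (hinc : ∀ i, m ≤ i → i < n → a i ≤ a (i + 1)) :
    ∑ i ∈ range n, |a (i + 1) - a i| = a 0 + a n - 2 * a m := by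
  have hleft : ∑ i ∈ range m, |a (i + 1) - a i| = a 0 - a m := by
    rw [← sum_range_sub']
    refine sum_congr rfl fun i hi => ?_
    rw [abs_of_nonpos (sub_nonpos.2 (hdec i (mem_range.1 hi))), neg_sub]
  have hright : ∑ i ∈ Ico m n, |a (i + 1) - a i| = a n - a m := by
    rw [sum_congr rfl fun i hi => abs_of_nonneg (sub_nonneg.2
      (hinc i (mem_Ico.1 hi).1 (mem_Ico.1 hi).2)), sum_Ico_eq_sub _ hmn, sum_range_sub, sum_range_sub]
    ring
  rw [← sum_range_add_sum_Ico _ hmn, hleft, hright]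
  ring

noncomputable def tCoeff (n k : ℕ) : ℝ := Nat.centralBinom k * Nat.centralBinom (n - k)

theorem tCoeff_zero (n : ℕ) : tCoeff n 0 = Nat.centralBinom n := by simp [tCoeff]

theorem tCoeff_self (n : ℕ) : tCoeff n n = Nat.centralBinom n := by simp [tCoeff]

theorem tCoeff_nonneg (n k : ℕ) : 0 ≤ tCoeff n k := by unfold tCoeff; positivity

theorem tCoeff_succ_le {n k : ℕ} (h : 2 * k + 1 ≤ n) : tCoeff n (k + 1) ≤ tCoeff n k := by
  obtain ⟨j, rfl⟩ : ∃ j, n = k + 1 + j := ⟨n - (k + 1), by omega⟩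
  rw [tCoeff, tCoeff, show k + 1 + j - (k + 1) = j by omega, show k + 1 + j - k = j + 1 by omega]
  exact_mod_cast Nat.centralBinom_succ_mul_le_mul_centralBinom_succ (by omega)

theorem tCoeff_le_succ {n k : ℕ} (h : n ≤ 2 * k + 1) (hk : k < n) :
    tCoeff n k ≤ tCoeff n (k + 1) := by
  obtain ⟨j, rfl⟩ : ∃ j, n = k + 1 + j := ⟨n - (k + 1), by omega⟩
  rw [tCoeff, tCoeff, show k + 1 + j - (k + 1) = j by omega, show k + 1 + j - k = j + 1 by omega,
    mul_comm, mul_comm (Nat.centralBinom (k + 1) : ℝ)]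
  exact_mod_cast Nat.centralBinom_succ_mul_le_mul_centralBinom_succ (by omega)

theorem sum_range_abs_tCoeff_sub_le (n : ℕ) :
    ∑ i ∈ range n, |tCoeff n (i + 1) - tCoeff n i| ≤ 2 * Nat.centralBinom n := by
  rw [sum_range_abs_sub_eq_of_antitone_monotone (tCoeff n) (m := n / 2) (by omega)
    (fun i hi => tCoeff_succ_le (by omega)) (fun i hi hin => tCoeff_le_succ (by omega) hin),
    tCoeff_zero, tCoeff_self]
  linarith [tCoeff_nonneg n (n / 2)]

theorem tSeq_eq_sum_tCoeff_smul (n : ℕ) (θ : ℝ) :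
    tSeq n θ = ∑ k ∈ range (n + 1), tCoeff n k • Complex.exp (↑(4 * θ) * Complex.I) ^ k := by
  refine sum_congr rfl fun k _ => ?_
  rw [Complex.real_smul, tCoeff, ← Complex.exp_nat_mul, ← Nat.centralBinom_eq_two_mul_choose,
    ← Nat.centralBinom_eq_two_mul_choose]
  push_cast
  ring_nf

theorem norm_exp_four_mul_I_sub_one (θ : ℝ) :
    ‖Complex.exp (↑(4 * θ) * Complex.I) - 1‖ = 2 * |Real.sin (2 * θ)| := by
  rw [mul_comm, Complex.norm_exp_I_mul_ofReal_sub_one, norm_mul, Real.norm_two, Real.norm_eq_abs,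
    show 4 * θ / 2 = 2 * θ by ring]

theorem norm_tSeq_le (n : ℕ) {θ : ℝ} (hθ : Real.sin (2 * θ) ≠ 0) :
    ‖tSeq n θ‖ ≤ 3 / |Real.sin (2 * θ)| * Nat.centralBinom n := by
  set z := Complex.exp (↑(4 * θ) * Complex.I)
  have hz : ‖z‖ = 1 := Complex.norm_exp_ofReal_mul_I _
  have hz1 : ‖z - 1‖ = 2 * |Real.sin (2 * θ)| := norm_exp_four_mul_I_sub_one θ
  have hz1' : z ≠ 1 := sub_ne_zero.1 (norm_pos_iff.1 (by rw [hz1]; positivity))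
  rw [tSeq_eq_sum_tCoeff_smul]
  calc _ ≤ (|tCoeff n n| + ∑ i ∈ range n, |tCoeff n (i + 1) - tCoeff n i|) * (2 / ‖z - 1‖) :=
        norm_sum_range_succ_smul_le _ _ n (norm_geom_sum_le hz.le hz1')
    _ ≤ (Nat.centralBinom n + 2 * Nat.centralBinom n) * (2 / (2 * |Real.sin (2 * θ)|)) := by
        rw [tCoeff_self, Nat.abs_cast, hz1]
        gcongr
        exact sum_range_abs_tCoeff_sub_le n
    _ = 3 / |Real.sin (2 * θ)| * Nat.centralBinom n := by
        field_simp
        ring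

/-- If `sin (2ϑ) ≠ 0`, there is a constant `C(ϑ) > 0` such that
`|t_n(ϑ)| ≤ C(ϑ) · 4^n / √n` for every positive integer `n`. -/
theorem tSeq_upper_bound (θ : ℝ) (hθ : Real.sin (2 * θ) ≠ 0) :
    ∃ C : ℝ, 0 < C ∧ ∀ n : ℕ, 1 ≤ n →
      ‖tSeq n θ‖ ≤ C * 4 ^ n / Real.sqrt n := by
  refine ⟨3 / |Real.sin (2 * θ)|, by positivity, fun n hn => ?_⟩
  calc ‖tSeq n θ‖ ≤ 3 / |Real.sin (2 * θ)| * Nat.centralBinom n := norm_tSeq_le n hθ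
    _ ≤ 3 / |Real.sin (2 * θ)| * (4 ^ n / √n) := by
        gcongr
        exact Nat.centralBinom_le_four_pow_div_sqrt hn
    _ = 3 / |Real.sin (2 * θ)| * 4 ^ n / √n := (mul_div_assoc _ _ _).symm
end

section
/- For ω ∈ (0, π) and c > 1/2, let E_{ω,c} = {n ∈ ℕ, n ≥ 1 : sin(ω) · sin(nω) ≥ c}. Then a real number ω ∈ (0, π) satisfies 'there exists c > 1/2 such that E_{ω,c} has positive lower density' if and only if ω ∈ (π/6, 5π/6). -/
/-!
If `sin ω ≤ 1/2`, then `sin ω · sin (n ω) ≤ 1/2 < c` for every `n`, so `E_{ω,c}` is empty.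
If `sin ω > 1/2`, one of `n₀ = 1, 2, 3, 6` already gives `sin ω · sin (n₀ ω) > 1/2`, and it remains
to return close to the angle `n₀ ω` with bounded gaps. By Dirichlet's theorem some `q ≥ 1` has
`δ = q ω - 2π a` as small as we like; the multiples `g δ` then pass within `|δ|` of `2πℤ` at least
once in every window of `⌈2π / |δ|⌉ + 1` consecutive `g` (always, when `δ = 0`), and at these `g`
the angle `(n₀ + q g) ω` is within `|δ|` of `n₀ ω` modulo `2π`.
-/

open Real

/-- The lower (asymptotic) density of a set `A` of positive integers:
`liminf_{n → ∞} |A ∩ {1, …, n}| / n`. -/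
noncomputable def lowerDensity (A : Set ℕ) : ℝ :=
  Filter.liminf (fun n : ℕ => ((A ∩ Set.Icc 1 n).ncard : ℝ) / n) Filter.atTop

/-- `E_{ω,c}`: the set of positive integers `n` such that `sin ω · sin (nω) ≥ c`. -/
def Eset (ω c : ℝ) : Set ℕ := {n : ℕ | 1 ≤ n ∧ c ≤ Real.sin ω * Real.sin (n * ω)}

open Filter Set

lemma ncard_inter_Icc_le (E : Set ℕ) (N : ℕ) : (E ∩ Icc 1 N).ncard ≤ N := by
  simpa using Set.ncard_le_ncard (inter_subset_right (s := E)) (finite_Icc 1 N)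

lemma div_le_ncard_inter_Icc {E : Set ℕ} {M : ℕ} (h : ∀ N, ∃ n ∈ E, N < n ∧ n ≤ N + M)
    (N : ℕ) : N / M ≤ (E ∩ Icc 1 N).ncard := by
  choose g hgE hlt hle using h
  have hmono : StrictMono fun k => g (k * M) := strictMono_nat_of_lt_succ fun k => by
    have h₁ := hle (k * M)
    have h₂ := hlt ((k + 1) * M)
    rw [add_one_mul] at h₂ ⊢
    omega
  have hcard := Set.ncard_le_ncard_of_injOn (s := (Finset.range (N / M) : Set ℕ))
    (t := E ∩ Icc 1 N) (fun k => g (k * M)) (fun k hk => ?_) hmono.injective.injOn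
  · simpa using hcard
  · have hk : (k + 1) * M ≤ N / M * M := Nat.mul_le_mul_right M (by simpa using hk)
    have h₁ := hle (k * M)
    have h₂ := hlt (k * M)
    have h₃ := Nat.div_mul_le_self N M
    rw [add_one_mul] at hk
    exact ⟨hgE _, by omega, by omega⟩

@[simp] lemma lowerDensity_empty : lowerDensity ∅ = 0 := by
  simp [lowerDensity]

lemma lowerDensity_pos_of_forall_exists_mem_Ioc {E : Set ℕ} {M : ℕ}
    (h : ∀ N, ∃ n ∈ E, N < n ∧ n ≤ N + M) : 0 < lowerDensity E := by
  have hM : 0 < M := by obtain ⟨n, -, h1, h2⟩ := h 0; omega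
  have hbdd : IsBoundedUnder (· ≤ ·) atTop fun N : ℕ => ((E ∩ Icc 1 N).ncard : ℝ) / N :=
    isBoundedUnder_of ⟨1, fun N => div_le_one_of_le₀ (by exact_mod_cast ncard_inter_Icc_le E N)
      N.cast_nonneg⟩
  have hev : ∀ᶠ N : ℕ in atTop, 1 / (2 * M : ℝ) ≤ ((E ∩ Icc 1 N).ncard : ℝ) / N := by
    filter_upwards [eventually_ge_atTop (2 * M)] with N hN
    -- `M * (N / M) > N - M ≥ N / 2`
    have hdiv : N ≤ 2 * (M * (N / M)) := by
      have := Nat.div_add_mod N M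
      have := Nat.mod_lt N hM
      omega
    have hcard : (N : ℝ) ≤ 2 * M * (E ∩ Icc 1 N).ncard := by
      have := Nat.mul_le_mul_left (2 * M) (div_le_ncard_inter_Icc h N)
      exact_mod_cast hdiv.trans (by linarith)
    rw [div_le_div_iff₀ (by positivity) (by exact_mod_cast (by omega : 0 < N))]
    linarith
  exact (by positivity : (0 : ℝ) < 1 / (2 * M)).trans_le
    (le_liminf_of_le hbdd.isCoboundedUnder_ge hev)

lemma half_lt_sin_iff {ω : ℝ} (hω : ω ∈ Ioo 0 π) :
    1 / 2 < sin ω ↔ ω ∈ Ioo (π / 6) (5 * π / 6) := by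
  have hπ := pi_pos
  have key : ∀ x ∈ Icc 0 (π / 2), 1 / 2 < sin x ↔ π / 6 < x := fun x hx => by
    rw [← sin_pi_div_six]
    exact strictMonoOn_sin.lt_iff_lt ⟨by linarith, by linarith⟩ ⟨by linarith [hx.1], hx.2⟩
  rcases le_total ω (π / 2) with h | h
  · rw [key ω ⟨hω.1.le, h⟩]
    exact ⟨fun h' => ⟨h', by linarith⟩, And.left⟩
  · rw [← sin_pi_sub, key (π - ω) ⟨by linarith [hω.2], by linarith⟩]
    exact ⟨fun h' => ⟨by linarith, by linarith⟩, fun h' => by linarith [h'.2]⟩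

lemma exists_nat_abs_mul_sub_int_mul_le (ω : ℝ) {T η : ℝ} (hT : 0 < T) (hη : 0 < η) :
    ∃ q : ℕ, 0 < q ∧ ∃ a : ℤ, |q * ω - a * T| ≤ η := by
  obtain ⟨q, hq, -, hqa⟩ := Real.exists_nat_abs_mul_sub_round_le (ω / T)
    (Nat.one_le_ceil_iff.mpr (by positivity : 0 < T / η))
  refine ⟨q, hq, round (q * (ω / T)), ?_⟩
  have hTη : T / η ≤ ⌈T / η⌉₊ := Nat.le_ceil _
  rw [div_le_iff₀ hη] at hTη
  calc |q * ω - round (q * (ω / T)) * T| = T * |q * (ω / T) - round (q * (ω / T))| := by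
        rw [← abs_of_pos hT, ← abs_mul, abs_of_pos hT]; congr 1; field_simp
    _ ≤ T * (1 / (⌈T / η⌉₊ + 1)) := by gcongr
    _ ≤ η := by rw [mul_one_div, div_le_iff₀ (by positivity)]; nlinarith

lemma mul_lt_add_of_lt_div_add_one {x y c : ℝ} (hy : 0 < y) (h : c < x / y + 1) :
    c * y < x + y := by
  simpa [add_mul, div_mul_cancel₀ x hy.ne'] using mul_lt_mul_of_pos_right h hy

lemma exists_gap_nat_mul_mem_Ico_int_mul {δ T : ℝ} (hδ : 0 < δ) (hT : 0 < T) :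
    ∃ M : ℕ, ∀ N : ℕ, ∃ g : ℕ, N < g ∧ g ≤ N + M ∧
      ∃ k : ℤ, k * T ≤ g * δ ∧ g * δ < k * T + δ := by
  refine ⟨⌈T / δ⌉₊ + 1, fun N => ?_⟩
  set k := ⌈(N + 1) * δ / T⌉
  have hk₁ : (N + 1) * δ ≤ k * T := (div_le_iff₀ hT).mp (Int.le_ceil _)
  have hk₂ : k * T < (N + 1) * δ + T :=
    mul_lt_add_of_lt_div_add_one hT (Int.ceil_lt_add_one _)
  have hkT : 0 ≤ k * T / δ := div_nonneg (by nlinarith) hδ.le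
  set g := ⌈k * T / δ⌉₊
  have hg₁ : k * T ≤ g * δ := (div_le_iff₀ hδ).mp (Nat.le_ceil _)
  have hg₂ : g * δ < k * T + δ := mul_lt_add_of_lt_div_add_one hδ (Nat.ceil_lt_add_one hkT)
  have hTδ : T ≤ ⌈T / δ⌉₊ * δ := (div_le_iff₀ hδ).mp (Nat.le_ceil _)
  have hNg : (N + 1 : ℝ) ≤ g := le_of_mul_le_mul_right (hk₁.trans hg₁) hδ
  have hgN : (g : ℝ) < N + ⌈T / δ⌉₊ + 2 := lt_of_mul_lt_mul_right (by linarith) hδ.le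
  refine ⟨g, by exact_mod_cast hNg, ?_, k, hg₁, hg₂⟩
  have : g < N + ⌈T / δ⌉₊ + 2 := by exact_mod_cast hgN
  omega

lemma exists_gap_nat_abs_mul_sub_int_mul_le_abs (δ : ℝ) {T : ℝ} (hT : 0 < T) :
    ∃ M : ℕ, ∀ N : ℕ, ∃ g : ℕ, N < g ∧ g ≤ N + M ∧ ∃ k : ℤ, |g * δ - k * T| ≤ |δ| := by
  rcases lt_trichotomy δ 0 with hδ | rfl | hδ
  · obtain ⟨M, hM⟩ := exists_gap_nat_mul_mem_Ico_int_mul (neg_pos.mpr hδ) hT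
    refine ⟨M, fun N => ?_⟩
    obtain ⟨g, hNg, hgM, k, hk₁, hk₂⟩ := hM N
    refine ⟨g, hNg, hgM, -k, ?_⟩
    rw [abs_of_neg hδ, abs_le]
    push_cast
    constructor <;> linarith
  · exact ⟨1, fun N => ⟨N + 1, N.lt_succ_self, le_rfl, 0, by simp⟩⟩
  · obtain ⟨M, hM⟩ := exists_gap_nat_mul_mem_Ico_int_mul hδ hT
    refine ⟨M, fun N => ?_⟩
    obtain ⟨g, hNg, hgM, k, hk₁, hk₂⟩ := hM N
    refine ⟨g, hNg, hgM, k, ?_⟩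
    rw [abs_of_pos hδ, abs_le]
    constructor <;> linarith

lemma exists_gap_sin_nat_mul_ge (ω : ℝ) (n₀ : ℕ) {η : ℝ} (hη : 0 < η) :
    ∃ M : ℕ, ∀ N : ℕ, ∃ n : ℕ, N < n ∧ n ≤ N + M ∧ sin (n₀ * ω) - η ≤ sin (n * ω) := by
  obtain ⟨q, hq, a, hqa⟩ := exists_nat_abs_mul_sub_int_mul_le ω two_pi_pos hη
  obtain ⟨M, hM⟩ := exists_gap_nat_abs_mul_sub_int_mul_le_abs (q * ω - a * (2 * π)) two_pi_pos
  refine ⟨n₀ + q * M, fun N => ?_⟩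
  obtain ⟨g, hNg, hgM, k, hk⟩ := hM (N / q)
  refine ⟨n₀ + q * g, ?_, ?_, ?_⟩
  · have h₁ : N < q * (N / q + 1) := Nat.lt_mul_div_succ N hq
    have h₂ : q * (N / q + 1) ≤ q * g := Nat.mul_le_mul_left q hNg
    omega
  · have h₁ : q * g ≤ q * (N / q) + q * M := by
      rw [← Nat.mul_add]; exact Nat.mul_le_mul_left q hgM
    have h₂ : q * (N / q) ≤ N := Nat.mul_div_le N q
    omega
  · set θ := g * (q * ω - a * (2 * π)) - k * (2 * π)
    have hn : ((n₀ + q * g : ℕ) : ℝ) * ω = n₀ * ω + θ + ((k + g * a : ℤ) : ℝ) * (2 * π) := by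
      push_cast; ring
    rw [hn, sin_add_int_mul_two_pi]
    have := abs_sin_sub_sin_le (n₀ * ω) (n₀ * ω + θ)
    rw [show n₀ * ω - (n₀ * ω + θ) = -θ by ring, abs_neg] at this
    linarith [le_abs_self (sin (n₀ * ω) - sin (n₀ * ω + θ))]

lemma exists_half_lt_sin_mul_sin_nat_mul {ω : ℝ} (hω : 1 / 2 < sin ω) :
    ∃ n : ℕ, 1 / 2 < sin ω * sin (n * ω) := by
  rcases lt_trichotomy (sin ω ^ 2) (1 / 2) with hs | hs | hs
  · -- `s sin 3ω - 1/2 = (4 s² - 1) (1 - 2 s²) / 2` with `s = sin ω`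
    refine ⟨3, ?_⟩
    rw [Nat.cast_ofNat, sin_three_mul]
    have h₁ : 0 < 4 * sin ω ^ 2 - 1 := by nlinarith
    have h₂ : 0 < 1 - 2 * sin ω ^ 2 := by linarith
    nlinarith [mul_pos h₁ h₂]
  · have hsin2 : sin (2 * ω) ^ 2 = 1 := by
      have := cos_sq_add_sin_sq (2 * ω)
      rw [cos_two_mul, cos_sq', hs] at this
      linarith
    rcases sq_eq_one_iff.mp hsin2 with h | h
    · exact ⟨2, by rw [Nat.cast_ofNat, h]; linarith⟩
    · refine ⟨6, ?_⟩
      rw [Nat.cast_ofNat, show (6 : ℝ) * ω = 3 * (2 * ω) by ring, sin_three_mul, h]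
      linarith
  · exact ⟨1, by rw [Nat.cast_one, one_mul, ← sq]; exact hs⟩

/-- For `ω ∈ (0, π)`: there exists `c > 1/2` such that `E_{ω,c}` has
positive lower density if and only if `ω ∈ (π/6, 5π/6)`. -/
theorem exists_pos_lowerDensity_Eset_iff (ω : ℝ) (hω : ω ∈ Set.Ioo 0 π) :
    (∃ c : ℝ, 1 / 2 < c ∧ 0 < lowerDensity (Eset ω c)) ↔
      ω ∈ Set.Ioo (π / 6) (5 * π / 6) := by
  rw [← half_lt_sin_iff hω]
  constructor
  · rintro ⟨c, hc, hpos⟩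
    obtain ⟨n, -, hn⟩ : (Eset ω c).Nonempty :=
      nonempty_iff_ne_empty.mpr fun h => by simp [h] at hpos
    have := mul_le_mul_of_nonneg_left (sin_le_one (n * ω))
      (sin_nonneg_of_mem_Icc (Ioo_subset_Icc_self hω))
    linarith
  · intro hs
    obtain ⟨n₀, hn₀⟩ := exists_half_lt_sin_mul_sin_nat_mul hs
    set p := sin ω * sin (n₀ * ω)
    obtain ⟨M, hM⟩ := exists_gap_sin_nat_mul_ge ω n₀ (η := (p - 1 / 2) / 2) (by linarith)
    refine ⟨(p + 1 / 2) / 2, by linarith,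
      lowerDensity_pos_of_forall_exists_mem_Ioc (M := M) fun N => ?_⟩
    obtain ⟨n, hNn, hnM, hn⟩ := hM N
    refine ⟨n, ⟨by omega, ?_⟩, hNn, hnM⟩
    nlinarith [mul_le_mul_of_nonneg_left hn (by linarith : 0 ≤ sin ω), sin_le_one ω]
end

section
/- Let p and q be coprime positive integers with q odd, q ≥ 3, and π/6 < pπ/q < 5π/6. Then sin(pπ/q) · cos(π/(2q)) > 1/2. -/
open Real

/-- Key algebraic identity: `sin(π/6+t)·cos(3t) − 1/2 = sin t·(cos(π/6+3t) − sin t)`. -/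
lemma sin_cos_key_identity (t : ℝ) :
    Real.sin (π / 6 + t) * Real.cos (3 * t) - 1 / 2 =
      Real.sin t * (Real.cos (π / 6 + 3 * t) - Real.sin t) := by
  have h1 : Real.sin (π / 6 + t) = Real.sin (π/6) * Real.cos t + Real.cos (π/6) * Real.sin t :=
    Real.sin_add _ _
  have h2 : Real.cos (π / 6 + 3 * t)
      = Real.cos (π/6) * Real.cos (3*t) - Real.sin (π/6) * Real.sin (3*t) := Real.cos_add _ _
  have h3 : Real.cos (3 * t) = 4 * Real.cos t ^ 3 - 3 * Real.cos t := Real.cos_three_mul t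
  have h4 : Real.sin (3 * t) = 3 * Real.sin t - 4 * Real.sin t ^ 3 := Real.sin_three_mul t
  have h5 : Real.sin (π/6) = 1/2 := Real.sin_pi_div_six
  have h6 : Real.cos (π/6) = Real.sqrt 3 / 2 := Real.cos_pi_div_six
  have h7 : Real.sin t ^ 2 + Real.cos t ^ 2 = 1 := Real.sin_sq_add_cos_sq t
  rw [h1, h2, h3, h4, h5, h6]
  linear_combination (2 * Real.cos t ^ 2 - 2 * Real.sin t ^ 2 + 1 / 2) * h7

/-- For coprime positive integers `p, q` with `q` odd, `q ≥ 3` and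
`π/6 < pπ/q < 5π/6`, one has `sin (pπ/q) · cos (π/(2q)) > 1/2`. -/
theorem sin_mul_cos_gt_half (p q : ℕ) (hp : 0 < p) (hcop : Nat.Coprime p q)
    (hodd : Odd q) (hq3 : 3 ≤ q)
    (h1 : π / 6 < (p : ℝ) * π / q) (h2 : (p : ℝ) * π / q < 5 * π / 6) :
    1 / 2 < Real.sin ((p : ℝ) * π / q) * Real.cos (π / (2 * q)) := by
  have hπ := Real.pi_pos
  have hq0 : (0:ℝ) < q := by positivity
  have hq3' : (3:ℝ) ≤ q := by exact_mod_cast hq3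
  set t : ℝ := π / (6 * q) with ht
  have ht0 : 0 < t := by positivity
  have ht18 : t ≤ π / 18 := by
    rw [ht, div_le_div_iff₀ (by positivity) (by norm_num)]
    nlinarith
  -- integer gap: q < 6p and 6p < 5q give q+1 ≤ 6p, 6p+1 ≤ 5q
  have hlow : (q:ℝ) < 6 * p := by
    rw [div_lt_div_iff₀ (by norm_num) hq0] at h1
    nlinarith
  have hhigh : (6:ℝ) * p < 5 * q := by
    rw [div_lt_div_iff₀ hq0 (by norm_num)] at h2
    nlinarith
  have hlowN : q + 1 ≤ 6 * p := by
    have : q < 6 * p := by exact_mod_cast hlow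
    omega
  have hhighN : 6 * p + 1 ≤ 5 * q := by
    have : 6 * p < 5 * q := by exact_mod_cast hhigh
    omega
  have hlowR : (q:ℝ) + 1 ≤ 6 * p := by exact_mod_cast hlowN
  have hhighR : (6:ℝ) * p + 1 ≤ 5 * q := by exact_mod_cast hhighN
  set x : ℝ := (p : ℝ) * π / q with hx
  have hx1 : π / 6 + t ≤ x := by
    rw [hx, ht, le_div_iff₀ hq0]
    have h6q : (0:ℝ) < 6 * q := by positivity
    rw [div_add_div _ _ (by norm_num) (ne_of_gt h6q), div_mul_eq_mul_div, div_le_iff₀ (by positivity)]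
    nlinarith [mul_le_mul_of_nonneg_left hlowR (le_of_lt (mul_pos hπ hq0))]
  have hx2 : x ≤ 5 * π / 6 - t := by
    rw [hx, ht, div_le_iff₀ hq0] at *
    have h6q : (0:ℝ) < 6 * q := by positivity
    rw [div_sub_div _ _ (by norm_num) (ne_of_gt h6q), div_mul_eq_mul_div, le_div_iff₀ (by positivity)]
    nlinarith [mul_le_mul_of_nonneg_left hhighR (le_of_lt (mul_pos hπ hq0))]
  -- sin x ≥ sin (π/6 + t)
  have hsin : Real.sin (π / 6 + t) ≤ Real.sin x := by
    rcases le_or_gt x (π / 2) with hc | hc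
    · exact Real.sin_le_sin_of_le_of_le_pi_div_two (by linarith) hc hx1
    · rw [← Real.sin_pi_sub x]
      exact Real.sin_le_sin_of_le_of_le_pi_div_two (by linarith) (by linarith) (by linarith)
  -- cos (π/(2q)) = cos (3t)
  have hcoseq : Real.cos (π / (2 * q)) = Real.cos (3 * t) := by
    congr 1
    rw [ht]
    field_simp
    ring
  -- key positivity: cos (π/6 + 3t) > sin t
  have hkey : Real.sin t < Real.cos (π / 6 + 3 * t) := by
    have hst : Real.sin t = Real.cos (π / 2 - t) := (Real.cos_pi_div_two_sub t).symm
    rw [hst]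
    apply Real.cos_lt_cos_of_nonneg_of_le_pi (by linarith) (by linarith) (by linarith)
  have hsint : 0 < Real.sin t := Real.sin_pos_of_pos_of_lt_pi ht0 (by linarith)
  have hmain : 1 / 2 < Real.sin (π / 6 + t) * Real.cos (3 * t) := by
    have hid := sin_cos_key_identity t
    have hpos := mul_pos hsint (sub_pos.mpr hkey)
    linarith
  have hcos3t : 0 < Real.cos (3 * t) := by
    apply Real.cos_pos_of_mem_Ioo
    constructor <;> linarith
  rw [hcoseq]
  calc 1/2 < Real.sin (π / 6 + t) * Real.cos (3*t) := hmain
    _ ≤ Real.sin x * Real.cos (3*t) := by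
        apply mul_le_mul_of_nonneg_right hsin (le_of_lt hcos3t)
end

section
/- Fix a positive integer n and for 0 ≤ k ≤ n set v_k = binomial(2k,k) · binomial(2n−2k, n−k). Then for every k with 0 ≤ k and 2k + 1 ≤ n − 1 (i.e., k < n/2 so that k+1 ≤ n), one has v_k − v_{k+1} = 2 · binomial(2k,k) · binomial(2(n−k−1), n−k−1) · (n − 2k − 1) / ((n−k)(k+1)); in particular v_k > v_{k+1} whenever 2k + 1 < n, so the sequence (v_k) is strictly decreasing for k < n/2. -/
/-- `v_k = C(2k, k) · C(2n − 2k, n − k)`. -/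
def vSeq (n k : ℕ) : ℕ := (2 * k).choose k * (2 * (n - k)).choose (n - k)

lemma centralBinom_succ_real (j : ℕ) :
    ((j : ℝ) + 1) * ((2 * (j + 1)).choose (j + 1) : ℝ)
      = 2 * (2 * (j : ℝ) + 1) * ((2 * j).choose j : ℝ) := by
  have h := Nat.succ_mul_centralBinom_succ j
  simp only [Nat.centralBinom] at h
  have h' := congrArg (Nat.cast : ℕ → ℝ) h
  push_cast at h'
  linarith [h']

/-- For a fixed positive integer `n` and `0 ≤ k` with `2k + 1 ≤ n − 1`,
`v_k − v_{k+1} = 2 C(2k,k) C(2(n−k−1), n−k−1) (n − 2k − 1)/((n−k)(k+1))`; in particular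
`v_k > v_{k+1}` whenever `2k + 1 < n`, i.e. `(v_k)` is strictly decreasing for `k < n/2`. -/
theorem vSeq_sub_succ_eq_and_strict_anti (n : ℕ) (hn : 0 < n) :
    (∀ k : ℕ, 2 * k + 1 ≤ n - 1 →
        ((vSeq n k : ℝ) - (vSeq n (k + 1) : ℝ))
          = 2 * ((2 * k).choose k : ℝ) * ((2 * (n - k - 1)).choose (n - k - 1) : ℝ) *
              ((n : ℝ) - 2 * k - 1) / (((n : ℝ) - k) * ((k : ℝ) + 1))) ∧
      ∀ k : ℕ, 2 * k + 1 < n → vSeq n (k + 1) < vSeq n k := by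
  have key : ∀ k : ℕ, 2 * k + 1 ≤ n - 1 →
      ((vSeq n k : ℝ) - (vSeq n (k + 1) : ℝ))
        = 2 * ((2 * k).choose k : ℝ) * ((2 * (n - k - 1)).choose (n - k - 1) : ℝ) *
            ((n : ℝ) - 2 * k - 1) / (((n : ℝ) - k) * ((k : ℝ) + 1)) := by
    intro k hk
    have hnk : n = (n - k - 1) + k + 1 := by omega
    set m := n - k - 1 with hmdef
    have h1 : n - k = m + 1 := by omega
    have h2 : n - (k + 1) = m := by omega
    have hncast : (n : ℝ) = (m : ℝ) + (k : ℝ) + 1 := by exact_mod_cast congrArg (Nat.cast : ℕ → ℝ) hnk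
    have hk1 := centralBinom_succ_real k
    have hm1 := centralBinom_succ_real m
    simp only [vSeq, h1, h2, hncast]
    have hd1 : (m : ℝ) + (k : ℝ) + 1 - (k:ℝ) ≠ 0 := by intro h; nlinarith [Nat.cast_nonneg (α := ℝ) m]
    have hd2 : (k : ℝ) + 1 ≠ 0 := by positivity
    push_cast
    field_simp
    linear_combination ((2 * k).choose k : ℝ) * ((k : ℝ) + 1) * hm1 - ((2 * m).choose m : ℝ) * ((m : ℝ) + 1) * hk1
  refine ⟨key, ?_⟩
  intro k hklt
  have hk : 2 * k + 1 ≤ n - 1 := by omega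
  have h := key k hk
  have hm : k + 1 ≤ n - k - 1 := by omega
  have hb1 : 0 < ((2 * k).choose k : ℝ) := by
    exact_mod_cast Nat.centralBinom_pos k
  have hb2 : 0 < ((2 * (n - k - 1)).choose (n - k - 1) : ℝ) := by
    exact_mod_cast Nat.centralBinom_pos (n - k - 1)
  have hnum : 0 < (n : ℝ) - 2 * k - 1 := by
    have : (2 * k + 1 : ℕ) < n := hklt
    have : (2 * (k : ℝ) + 1) < n := by exact_mod_cast this
    linarith
  have hden : 0 < ((n : ℝ) - k) * ((k : ℝ) + 1) := by
    have : (k : ℕ) < n := by omega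
    have : (k : ℝ) < n := by exact_mod_cast this
    nlinarith
  have hdiff : 0 < (vSeq n k : ℝ) - (vSeq n (k + 1) : ℝ) := by
    rw [h]; positivity
  have : (vSeq n (k + 1) : ℝ) < (vSeq n k : ℝ) := by linarith
  exact_mod_cast this
end

section
/- Fix a positive integer n, set v_k = binomial(2k,k) · binomial(2n−2k, n−k) for 0 ≤ k ≤ n, and w_k = v_k − v_{k+1}. Then for every k with 0 ≤ k ≤ (n−3)/2, one has w_{k+1} ≤ w_k; that is, the sequence (w_k) is decreasing for k up to (n−3)/2. -/
/-- `w_k = v_k − v_{k+1}`, as a real number. -/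
noncomputable def wSeq (n k : ℕ) : ℝ := (vSeq n k : ℝ) - (vSeq n (k + 1) : ℝ)

/-!
Writing `c j = C(2j, j)`, we have `v_k = c k · c (n - k)`, and `w_{k+1} ≤ w_k` says
`2 c(k+1) c(m+1) ≤ c k · c(m+2) + c(k+2) · c m` with `m = n - k - 2`. The sequence `c` is
log-convex, since `c(j+1)/c(j) = 2(2j+1)/(j+1)` increases. For any positive log-convex `f`,
multiplying by `f j · f m` and using log-convexity at `j` and at `m` reduces the inequality to
`f j² f(m+1)² + f m² f(j+1)² ≥ 2 f j f m f(j+1) f(m+1)`, i.e. AM-GM.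
-/

open Nat

theorem centralBinom_succ_sq_le (j : ℕ) :
    centralBinom (j + 1) ^ 2 ≤ centralBinom j * centralBinom (j + 2) := by
  have h₁ := succ_mul_centralBinom_succ j
  have h₂ := succ_mul_centralBinom_succ (j + 1)
  refine Nat.le_of_mul_le_mul_left ?_ (by positivity : 0 < 2 * (2 * j + 1) * (j + 2))
  calc 2 * (2 * j + 1) * (j + 2) * centralBinom (j + 1) ^ 2
      ≤ 2 * (2 * j + 3) * (j + 1) * centralBinom (j + 1) ^ 2 :=
        Nat.mul_le_mul_right _ (by nlinarith)
    _ = (j + 1) * centralBinom (j + 1) * ((j + 2) * centralBinom (j + 2)) := by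
      rw [h₂]; ring
    _ = 2 * (2 * j + 1) * (j + 2) * (centralBinom j * centralBinom (j + 2)) := by
      rw [h₁]; ring

theorem two_mul_mul_le_of_logConvex {R : Type*} [Field R] [LinearOrder R] [IsStrictOrderedRing R]
    {f : ℕ → R} (hpos : ∀ i, 0 < f i) (hf : ∀ i, f (i + 1) ^ 2 ≤ f i * f (i + 2)) (j m : ℕ) :
    2 * (f (j + 1) * f (m + 1)) ≤ f j * f (m + 2) + f (j + 2) * f m := by
  have hj := hpos j
  have hm := hpos m
  refine le_of_mul_le_mul_left ?_ (mul_pos hj hm)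
  nlinarith [mul_le_mul_of_nonneg_left (hf j) (sq_nonneg (f m)),
    mul_le_mul_of_nonneg_left (hf m) (sq_nonneg (f j)),
    sq_nonneg (f j * f (m + 1) - f m * f (j + 1))]

theorem vSeq_eq_centralBinom_mul (n k : ℕ) :
    vSeq n k = centralBinom k * centralBinom (n - k) := by
  simp only [vSeq, centralBinom_eq_two_mul_choose]

theorem wSeq_antitone_general (n : ℕ) (k : ℕ) (hk : 2 * k + 3 ≤ n) :
    wSeq n (k + 1) ≤ wSeq n k := by
  obtain ⟨m, rfl⟩ : ∃ m, n = k + 2 + m := ⟨n - (k + 2), by omega⟩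
  have hconvex := two_mul_mul_le_of_logConvex (f := fun i ↦ (centralBinom i : ℝ))
    (fun i ↦ mod_cast centralBinom_pos i) (fun i ↦ mod_cast centralBinom_succ_sq_le i) k m
  simp only [wSeq, vSeq_eq_centralBinom_mul, show k + 2 + m - k = m + 2 by omega,
    show k + 2 + m - (k + 1) = m + 1 by omega, show k + 2 + m - (k + 1 + 1) = m by omega]
  push_cast at hconvex ⊢
  linarith

/-- For a fixed positive integer `n` and every `k` with
`0 ≤ k ≤ (n − 3)/2` (i.e. `2k + 3 ≤ n`), one has `w_{k+1} ≤ w_k` : the sequence `(w_k)`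
is decreasing for `k` up to `(n − 3)/2`. -/
theorem wSeq_antitone (n : ℕ) (hn : 0 < n) (k : ℕ) (hk : 2 * k + 3 ≤ n) :
    wSeq n (k + 1) ≤ wSeq n k :=
  wSeq_antitone_general n k hk
end
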